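/- Fix s > 0 and θ, θ* > 0. Let X, Y, B be independent random variables where X has the Gamma distribution with shape 2s and scale θ (density γ_{θ}(x) = x^{2s−1} e^{−x/θ}/(θ^{2s} Γ(2s)) on (0,∞)), Y has the Gamma distribution with shape 2s and scale θ*, and B has the Beta(2s,2s) distribution. Then the law of B·(X+Y) equals the Beta(2s,2s)-mixture of Gamma distributions: for every Borel set A ⊆ [0,∞), P(B(X+Y) ∈ A) = ∫₀¹ (∫_A γ_{(1−u)θ + u θ*}(x) dx) β_s(u) du. (This is the intertwining of the continuous generalized KMP reservoir generator with the hidden-parameter reservoir generator via the Gamma kernel.) -/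

import Mathlib

/-!
Write `X = θ ξ` and `Y = θ* η` with `ξ, η` independent `Gamma(2s, 1)`. In the coordinates
`ξ = r (1 - u)`, `η = r u`, whose Jacobian is `r`, the pair `(ξ, η)` becomes an independent pair
`R ~ Gamma(4s, 1)`, `U ~ Beta(2s, 2s)`, and `X + Y = ((1 - U) θ + U θ*) R`. The same change of
variables read backwards shows that `B R ~ Gamma(2s, 1)` for `B ~ Beta(2s, 2s)` independent of `R`.
Hence `B (X + Y) = ((1 - U) θ + U θ*) (B R)` is `Gamma(2s, (1 - U) θ + U θ*)` given `U`.
-/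

open MeasureTheory Real Set

/-- The Gamma(shape 2s, scale θ) density on (0,∞). -/
noncomputable def gammaDens (s θ x : ℝ) : ℝ :=
  x ^ (2 * s - 1) * Real.exp (-x / θ) / (θ ^ (2 * s) * Real.Gamma (2 * s))

/-- The Gamma(shape 2s, scale θ) distribution as a measure on ℝ. -/
noncomputable def gammaMeas (s θ : ℝ) : Measure ℝ :=
  (volume.restrict (Set.Ioi (0 : ℝ))).withDensity (fun x => ENNReal.ofReal (gammaDens s θ x))

/-- The Beta(2s,2s) density on (0,1). -/
noncomputable def betaDens (s u : ℝ) : ℝ :=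
  u ^ (2 * s - 1) * (1 - u) ^ (2 * s - 1) /
    ∫ v in Set.Ioo (0 : ℝ) 1, v ^ (2 * s - 1) * (1 - v) ^ (2 * s - 1)

/-- The Beta(2s,2s) distribution as a measure on ℝ. -/
noncomputable def betaMeas (s : ℝ) : Measure ℝ :=
  (volume.restrict (Set.Ioo (0 : ℝ) 1)).withDensity (fun u => ENNReal.ofReal (betaDens s u))

open ProbabilityTheory
open scoped ENNReal

theorem hasFDerivAt_betaGammaCoord (q : ℝ × ℝ) :
    HasFDerivAt (fun q : ℝ × ℝ => (q.2 * (1 - q.1), q.2 * q.1))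
      (Matrix.toLin (.finTwoProd ℝ) (.finTwoProd ℝ)
        !![-q.2, 1 - q.1; q.2, q.1]).toContinuousLinearMap q := by
  have hfst : HasFDerivAt (Prod.fst : ℝ × ℝ → ℝ) (ContinuousLinearMap.fst ℝ ℝ ℝ) q :=
    hasFDerivAt_fst
  have hsnd : HasFDerivAt (Prod.snd : ℝ × ℝ → ℝ) (ContinuousLinearMap.snd ℝ ℝ ℝ) q :=
    hasFDerivAt_snd
  rw [Matrix.toLin_finTwoProd_toContinuousLinearMap]
  refine ((hsnd.fun_mul (hfst.const_sub 1)).prodMk (hsnd.fun_mul hfst)).congr_fderiv ?_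
  ext <;> simp

theorem setLIntegral_comp_betaGammaCoord (f : ℝ × ℝ → ℝ≥0∞) :
    ∫⁻ q in Ioo 0 1 ×ˢ Ioi 0, ENNReal.ofReal q.2 * f (q.2 * (1 - q.1), q.2 * q.1)
      = ∫⁻ p in Ioi 0 ×ˢ Ioi 0, f p := by
  have himage : (fun q : ℝ × ℝ => (q.2 * (1 - q.1), q.2 * q.1)) '' (Ioo 0 1 ×ˢ Ioi 0)
      = Ioi 0 ×ˢ Ioi 0 := by
    ext ⟨x, y⟩
    simp only [mem_image, mem_prod, mem_Ioo, mem_Ioi, Prod.mk.injEq, Prod.exists]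
    constructor
    · rintro ⟨u, r, ⟨⟨hu₀, hu₁⟩, hr⟩, rfl, rfl⟩
      exact ⟨by nlinarith, by positivity⟩
    · rintro ⟨hx, hy⟩
      refine ⟨y / (x + y), x + y, ⟨⟨by positivity, ?_⟩, by positivity⟩, ?_, ?_⟩
      · rw [div_lt_one (by positivity)]; linarith
      · field_simp; ring
      · field_simp
  have hinj : InjOn (fun q : ℝ × ℝ => (q.2 * (1 - q.1), q.2 * q.1)) (Ioo 0 1 ×ˢ Ioi 0) := by
    rintro ⟨u, r⟩ ⟨_, hr⟩ ⟨u', r'⟩ _ h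
    simp only [Prod.mk.injEq] at h
    obtain rfl : r = r' := by linarith [h.1, h.2]
    exact Prod.ext (mul_left_cancel₀ (ne_of_gt hr) h.2) rfl
  rw [← himage, lintegral_image_eq_lintegral_abs_det_fderiv_mul volume
    (measurableSet_Ioo.prod measurableSet_Ioi)
    (fun q _ => (hasFDerivAt_betaGammaCoord q).hasFDerivWithinAt) hinj]
  refine setLIntegral_congr_fun (measurableSet_Ioo.prod measurableSet_Ioi) fun q hq => ?_
  simp only [LinearMap.det_toContinuousLinearMap, LinearMap.det_toLin, Matrix.det_fin_two_of]
  rw [show -q.2 * q.1 - (1 - q.1) * q.2 = -q.2 by ring, abs_neg, abs_of_pos hq.2]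

theorem setLIntegral_Ioi_eq_mul_comp {c : ℝ} (hc : 0 < c) (f : ℝ → ℝ≥0∞) :
    ∫⁻ x in Ioi 0, f x = ∫⁻ x in Ioi 0, ENNReal.ofReal c * f (c * x) := by
  have himage : (c * ·) '' Ioi 0 = Ioi 0 := by rw [image_mul_left_Ioi hc, mul_zero]
  conv_lhs => rw [← himage]
  rw [lintegral_image_eq_lintegral_abs_deriv_mul measurableSet_Ioi
    (fun x _ => by simpa using ((hasDerivAt_id x).const_mul c).hasDerivWithinAt)
    (mul_right_injective₀ hc.ne').injOn, abs_of_pos hc]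

theorem setLIntegral_Ioi_mul_indicator_one {A : Set ℝ} (hA : MeasurableSet A)
    (hA' : A ⊆ Ici 0) (f : ℝ → ℝ≥0∞) :
    ∫⁻ z in Ioi 0, f z * A.indicator 1 z = ∫⁻ z in A, f z := by
  simp_rw [← indicator_mul_right, Pi.one_apply, mul_one]
  rw [restrict_Ioi_eq_restrict_Ici, lintegral_indicator hA, Measure.restrict_restrict hA,
    inter_eq_left.2 hA']

section

variable {s θ : ℝ}

@[fun_prop]
theorem Measurable.gammaDens {α : Type*} [MeasurableSpace α] {f g : α → ℝ}
    (hf : Measurable f) (hg : Measurable g) :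
    Measurable fun a => _root_.gammaDens s (f a) (g a) := by
  unfold _root_.gammaDens; fun_prop

@[fun_prop]
theorem measurable_betaDens : Measurable (betaDens s) := by
  unfold betaDens; fun_prop

theorem gammaDens_nonneg (hs : 0 < s) (hθ : 0 < θ) {x : ℝ} (hx : 0 ≤ x) :
    0 ≤ gammaDens s θ x := by
  have := Gamma_pos_of_pos (by linarith : 0 < 2 * s)
  unfold gammaDens; positivity

theorem gammaDens_eq_gammaPDFReal (hθ : 0 < θ) {x : ℝ} (hx : 0 ≤ x) :
    gammaDens s θ x = gammaPDFReal (2 * s) θ⁻¹ x := by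
  rw [gammaPDFReal, if_pos hx, gammaDens, inv_rpow hθ.le, neg_div, div_eq_inv_mul x]
  ring

theorem lintegral_gammaDens (hs : 0 < s) (hθ : 0 < θ) :
    ∫⁻ x in Ioi 0, ENNReal.ofReal (gammaDens s θ x) = 1 := by
  rw [← lintegral_gammaPDF_eq_one (by linarith : 0 < 2 * s) (inv_pos.2 hθ)]
  symm
  rw [← lintegral_add_compl _ (measurableSet_Ioi (a := 0)), compl_Ioi,
    ← restrict_Iio_eq_restrict_Iic, lintegral_gammaPDF_of_nonpos le_rfl, add_zero]
  exact setLIntegral_congr_fun measurableSet_Ioi fun x hx => by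
    rw [gammaPDF, gammaDens_eq_gammaPDFReal hθ (le_of_lt hx)]

theorem setLIntegral_gammaDens_le_one (hs : 0 < s) (hθ : 0 < θ) {A : Set ℝ}
    (hA' : A ⊆ Ici 0) : ∫⁻ x in A, ENNReal.ofReal (gammaDens s θ x) ≤ 1 :=
  calc _ ≤ ∫⁻ x in Ici 0, ENNReal.ofReal (gammaDens s θ x) := lintegral_mono_set hA'
    _ = 1 := by rw [← restrict_Ioi_eq_restrict_Ici, lintegral_gammaDens hs hθ]

theorem mul_gammaDens_mul {c : ℝ} (hc : 0 < c) (hθ : 0 < θ) {x : ℝ} (hx : 0 ≤ x) :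
    c * gammaDens s (c * θ) (c * x) = gammaDens s θ x := by
  have hcp : c ^ (2 * s) = c * c ^ (2 * s - 1) := by
    rw [rpow_sub_one hc.ne']; field_simp
  unfold gammaDens
  rw [mul_rpow hc.le hx, mul_rpow hc.le hθ.le, hcp,
    show -(c * x) / (c * θ) = -x / θ by field_simp]
  have : c ^ (2 * s - 1) ≠ 0 := (rpow_pos_of_pos hc _).ne'
  field_simp

theorem integral_Ioo_rpow_mul_one_sub_rpow {a b : ℝ} (ha : 0 < a) (hb : 0 < b) :
    ∫ v in Ioo 0 1, v ^ (a - 1) * (1 - v) ^ (b - 1) = beta a b := by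
  have hβ := beta_pos ha hb
  have hone := lintegral_betaPDF_eq_one ha hb
  rw [lintegral_betaPDF] at hone
  simp_rw [mul_assoc, ENNReal.ofReal_mul (one_div_pos.2 hβ).le] at hone
  rw [lintegral_const_mul' _ _ ENNReal.ofReal_ne_top] at hone
  have hlin : ∫⁻ v in Ioo 0 1, ENNReal.ofReal (v ^ (a - 1) * (1 - v) ^ (b - 1))
      = ENNReal.ofReal (beta a b) := by
    rw [ENNReal.eq_inv_of_mul_eq_one_left ((mul_comm _ _).trans hone),
      one_div, ENNReal.ofReal_inv_of_pos hβ, inv_inv]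
  rw [integral_eq_lintegral_of_nonneg_ae, hlin, ENNReal.toReal_ofReal hβ.le]
  · exact ae_restrict_of_forall_mem measurableSet_Ioo fun v hv =>
      mul_nonneg (rpow_nonneg hv.1.le _) (rpow_nonneg (by linarith [hv.2]) _)
  · exact Measurable.aestronglyMeasurable (by fun_prop)

theorem betaDens_eq (hs : 0 < s) (u : ℝ) :
    betaDens s u = 1 / beta (2 * s) (2 * s) * u ^ (2 * s - 1) * (1 - u) ^ (2 * s - 1) := by
  rw [betaDens, integral_Ioo_rpow_mul_one_sub_rpow (by linarith) (by linarith)]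
  ring

theorem betaDens_nonneg (hs : 0 < s) {u : ℝ} (hu : u ∈ Ioo 0 1) : 0 ≤ betaDens s u := by
  have := beta_pos (α := 2 * s) (β := 2 * s) (by linarith) (by linarith)
  have := hu.1
  have : 0 < 1 - u := by linarith [hu.2]
  rw [betaDens_eq hs]
  positivity

theorem lintegral_betaDens (hs : 0 < s) :
    ∫⁻ u in Ioo 0 1, ENNReal.ofReal (betaDens s u) = 1 := by
  simp_rw [betaDens_eq hs]
  rw [← lintegral_betaPDF, lintegral_betaPDF_eq_one (by linarith) (by linarith)]

theorem mul_gammaDens_mul_gammaDens (hs : 0 < s) (hθ : 0 < θ) {r u : ℝ} (hr : 0 < r)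
    (hu : u ∈ Ioo 0 1) :
    r * (gammaDens s θ (r * (1 - u)) * gammaDens s θ (r * u))
      = betaDens s u * gammaDens (2 * s) θ r := by
  have hu' : 0 < 1 - u := by linarith [hu.2]
  have hr' : r ^ (2 * (2 * s) - 1) = r * (r ^ (2 * s - 1) * r ^ (2 * s - 1)) := by
    rw [show 2 * (2 * s) - 1 = 1 + ((2 * s - 1) + (2 * s - 1)) by ring, rpow_add hr,
      rpow_add hr, rpow_one]
  have hθ' : θ ^ (2 * (2 * s)) = θ ^ (2 * s) * θ ^ (2 * s) := by
    rw [← rpow_add hθ]; ring_nf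
  have hexp : exp (-(r * (1 - u)) / θ) * exp (-(r * u) / θ) = exp (-r / θ) := by
    rw [← exp_add]; ring_nf
  have := Gamma_pos_of_pos (by linarith : 0 < 2 * s)
  have := Gamma_pos_of_pos (by linarith : 0 < 2 * (2 * s))
  have := rpow_pos_of_pos hθ (2 * s)
  rw [betaDens_eq hs, beta, show 2 * s + 2 * s = 2 * (2 * s) by ring]
  unfold gammaDens
  rw [mul_rpow hr.le hu'.le, mul_rpow hr.le hu.1.le, hr', hθ', ← hexp]
  field_simp

instance : SFinite (gammaMeas s θ) := by
  unfold gammaMeas; infer_instance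

instance : SFinite (betaMeas s) := by
  unfold betaMeas; infer_instance

theorem lintegral_gammaMeas (f : ℝ → ℝ≥0∞) :
    ∫⁻ x, f x ∂gammaMeas s θ = ∫⁻ x in Ioi 0, ENNReal.ofReal (gammaDens s θ x) * f x :=
  lintegral_withDensity_eq_lintegral_mul_non_measurable _ (by fun_prop)
    (ae_of_all _ fun _ => ENNReal.ofReal_lt_top) f

theorem lintegral_betaMeas (f : ℝ → ℝ≥0∞) :
    ∫⁻ u, f u ∂betaMeas s = ∫⁻ u in Ioo 0 1, ENNReal.ofReal (betaDens s u) * f u :=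
  lintegral_withDensity_eq_lintegral_mul_non_measurable _ (by fun_prop)
    (ae_of_all _ fun _ => ENNReal.ofReal_lt_top) f

theorem lintegral_gammaDens_mul_eq_lintegral_gammaDens_one_mul (hθ : 0 < θ)
    (H : ℝ → ℝ≥0∞) :
    ∫⁻ x in Ioi 0, ENNReal.ofReal (gammaDens s θ x) * H x
      = ∫⁻ x in Ioi 0, ENNReal.ofReal (gammaDens s 1 x) * H (θ * x) := by
  rw [setLIntegral_Ioi_eq_mul_comp hθ]
  refine setLIntegral_congr_fun measurableSet_Ioi fun x hx => ?_
  rw [← mul_assoc, ← ENNReal.ofReal_mul hθ.le, ← mul_gammaDens_mul hθ one_pos hx.le,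
    mul_one]

theorem setLIntegral_gammaDens_mul_gammaDens (hs : 0 < s) (hθ : 0 < θ)
    (f : ℝ × ℝ → ℝ≥0∞) :
    ∫⁻ p in Ioi 0 ×ˢ Ioi 0,
        ENNReal.ofReal (gammaDens s θ p.1) * ENNReal.ofReal (gammaDens s θ p.2) * f p
      = ∫⁻ q in Ioo 0 1 ×ˢ Ioi 0, ENNReal.ofReal (betaDens s q.1)
          * ENNReal.ofReal (gammaDens (2 * s) θ q.2) * f (q.2 * (1 - q.1), q.2 * q.1) := by
  rw [← setLIntegral_comp_betaGammaCoord]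
  refine setLIntegral_congr_fun (measurableSet_Ioo.prod measurableSet_Ioi) fun q ⟨hu, hr⟩ => ?_
  have hr' : (0 : ℝ) < q.2 := hr
  rw [← ENNReal.ofReal_mul (gammaDens_nonneg hs hθ (by nlinarith [hu.2])), ← mul_assoc,
    ← ENNReal.ofReal_mul hr'.le, mul_gammaDens_mul_gammaDens hs hθ hr' hu,
    ENNReal.ofReal_mul (betaDens_nonneg hs hu)]

theorem lintegral_gammaDens_two_mul_betaDens (hs : 0 < s) (hθ : 0 < θ) {G : ℝ → ℝ≥0∞}
    (hG : Measurable G) :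
    ∫⁻ r in Ioi 0, ENNReal.ofReal (gammaDens (2 * s) θ r)
        * ∫⁻ b in Ioo 0 1, ENNReal.ofReal (betaDens s b) * G (r * b)
      = ∫⁻ z in Ioi 0, ENNReal.ofReal (gammaDens s θ z) * G z := by
  calc _ = ∫⁻ q in Ioo 0 1 ×ˢ Ioi 0, ENNReal.ofReal (betaDens s q.1)
          * ENNReal.ofReal (gammaDens (2 * s) θ q.2) * G (q.2 * q.1) := by
        rw [Measure.volume_eq_prod, setLIntegral_prod_symm _ (by fun_prop)]
        refine lintegral_congr fun r => ?_
        rw [← lintegral_const_mul' _ _ ENNReal.ofReal_ne_top]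
        exact lintegral_congr fun b => by ring
    _ = ∫⁻ p in Ioi 0 ×ˢ Ioi 0,
          ENNReal.ofReal (gammaDens s θ p.1) * ENNReal.ofReal (gammaDens s θ p.2) * G p.2 :=
        (setLIntegral_gammaDens_mul_gammaDens hs hθ fun p => G p.2).symm
    _ = (∫⁻ x in Ioi 0, ENNReal.ofReal (gammaDens s θ x))
          * ∫⁻ z in Ioi 0, ENNReal.ofReal (gammaDens s θ z) * G z := by
        rw [Measure.volume_eq_prod, setLIntegral_prod _ (by fun_prop),
          ← lintegral_mul_const _ (by fun_prop)]
        simp_rw [mul_assoc, lintegral_const_mul' _ _ ENNReal.ofReal_ne_top]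
    _ = _ := by rw [lintegral_gammaDens hs hθ, one_mul]

theorem lintegral_gammaDens_mul_lintegral_gammaDens_comp_add (hs : 0 < s) (hθ : 0 < θ)
    {θs : ℝ} (hθs : 0 < θs) {Ψ : ℝ → ℝ≥0∞} (hΨ : Measurable Ψ) :
    ∫⁻ x in Ioi 0, ENNReal.ofReal (gammaDens s θ x)
        * ∫⁻ y in Ioi 0, ENNReal.ofReal (gammaDens s θs y) * Ψ (x + y)
      = ∫⁻ u in Ioo 0 1, ENNReal.ofReal (betaDens s u)
          * ∫⁻ r in Ioi 0,
              ENNReal.ofReal (gammaDens (2 * s) 1 r) * Ψ (((1 - u) * θ + u * θs) * r) := by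
  calc _ = ∫⁻ x in Ioi 0, ENNReal.ofReal (gammaDens s 1 x)
          * ∫⁻ y in Ioi 0, ENNReal.ofReal (gammaDens s 1 y) * Ψ (θ * x + θs * y) := by
        simp_rw [lintegral_gammaDens_mul_eq_lintegral_gammaDens_one_mul hθs,
          lintegral_gammaDens_mul_eq_lintegral_gammaDens_one_mul hθ (s := s)]
    _ = ∫⁻ p in Ioi 0 ×ˢ Ioi 0, ENNReal.ofReal (gammaDens s 1 p.1)
          * ENNReal.ofReal (gammaDens s 1 p.2) * Ψ (θ * p.1 + θs * p.2) := by
        rw [Measure.volume_eq_prod, setLIntegral_prod _ (by fun_prop)]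
        simp_rw [mul_assoc, lintegral_const_mul' _ _ ENNReal.ofReal_ne_top]
    _ = ∫⁻ q in Ioo 0 1 ×ˢ Ioi 0, ENNReal.ofReal (betaDens s q.1)
          * ENNReal.ofReal (gammaDens (2 * s) 1 q.2)
          * Ψ (θ * (q.2 * (1 - q.1)) + θs * (q.2 * q.1)) :=
        setLIntegral_gammaDens_mul_gammaDens hs one_pos _
    _ = _ := by
        rw [Measure.volume_eq_prod, setLIntegral_prod _ (by fun_prop)]
        simp_rw [mul_assoc, lintegral_const_mul' _ _ ENNReal.ofReal_ne_top,
          show ∀ u r : ℝ, θ * (r * (1 - u)) + θs * (r * u) = ((1 - u) * θ + u * θs) * r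
            from fun u r => by ring]

theorem lintegral_prod_gammaMeas_betaMeas (hs : 0 < s) (hθ : 0 < θ) {θs : ℝ} (hθs : 0 < θs)
    {F : ℝ → ℝ≥0∞} (hF : Measurable F) :
    ∫⁻ q, F (q.2.2 * (q.1 + q.2.1))
        ∂(gammaMeas s θ).prod ((gammaMeas s θs).prod (betaMeas s))
      = ∫⁻ u in Ioo 0 1, ENNReal.ofReal (betaDens s u)
          * ∫⁻ z in Ioi 0, ENNReal.ofReal (gammaDens s ((1 - u) * θ + u * θs) z) * F z := by
  set Φ : ℝ → ℝ≥0∞ := fun t =>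
    ∫⁻ b in Ioo 0 1, ENNReal.ofReal (betaDens s b) * F (b * t)
  have hΦ : Measurable Φ := Measurable.lintegral_prod_right'
    (f := fun p : ℝ × ℝ => ENNReal.ofReal (betaDens s p.2) * F (p.2 * p.1)) (by fun_prop)
  calc _ = ∫⁻ x in Ioi 0, ENNReal.ofReal (gammaDens s θ x)
          * ∫⁻ y in Ioi 0, ENNReal.ofReal (gammaDens s θs y) * Φ (x + y) := by
        rw [lintegral_prod _ (by fun_prop), lintegral_gammaMeas]
        refine lintegral_congr fun x => ?_
        rw [lintegral_prod _ (by fun_prop), lintegral_gammaMeas]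
        simp_rw [lintegral_betaMeas]
        rfl
    _ = ∫⁻ u in Ioo 0 1, ENNReal.ofReal (betaDens s u)
          * ∫⁻ r in Ioi 0,
              ENNReal.ofReal (gammaDens (2 * s) 1 r) * Φ (((1 - u) * θ + u * θs) * r) :=
        lintegral_gammaDens_mul_lintegral_gammaDens_comp_add hs hθ hθs hΦ
    _ = ∫⁻ u in Ioo 0 1, ENNReal.ofReal (betaDens s u)
          * ∫⁻ z in Ioi 0,
              ENNReal.ofReal (gammaDens s 1 z) * F (((1 - u) * θ + u * θs) * z) := by
        refine lintegral_congr fun u => ?_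
        have hcomm : ∀ b r : ℝ,
            b * (((1 - u) * θ + u * θs) * r) = ((1 - u) * θ + u * θs) * (r * b) :=
          fun b r => by ring
        rw [← lintegral_gammaDens_two_mul_betaDens hs one_pos (by fun_prop)]
        simp_rw [Φ, hcomm]
    _ = _ := by
        refine setLIntegral_congr_fun measurableSet_Ioo fun u ⟨hu₀, hu₁⟩ => ?_
        rw [lintegral_gammaDens_mul_eq_lintegral_gammaDens_one_mul
          (θ := (1 - u) * θ + u * θs) (by nlinarith)]

theorem ofReal_setIntegral_setIntegral_gammaDens_mul_betaDens (hs : 0 < s)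
    {c : ℝ → ℝ} (hc : Measurable c) (hc_pos : ∀ u ∈ Ioo 0 1, 0 < c u) {A : Set ℝ}
    (hA : MeasurableSet A) (hA' : A ⊆ Ici 0) :
    ENNReal.ofReal (∫ u in Ioo 0 1, (∫ x in A, gammaDens s (c u) x) * betaDens s u)
      = ∫⁻ u in Ioo 0 1,
          ENNReal.ofReal (betaDens s u) * ∫⁻ x in A, ENNReal.ofReal (gammaDens s (c u) x) := by
  set G : ℝ → ℝ≥0∞ := fun u =>
    ENNReal.ofReal (betaDens s u) * ∫⁻ x in A, ENNReal.ofReal (gammaDens s (c u) x)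
  have hG : Measurable G :=
    measurable_betaDens.ennreal_ofReal.mul (Measurable.lintegral_prod_right'
      (f := fun p : ℝ × ℝ => ENNReal.ofReal (gammaDens s (c p.1) p.2)) (by fun_prop))
  have hG_le : ∀ u ∈ Ioo 0 1, G u ≤ ENNReal.ofReal (betaDens s u) := fun u hu =>
    mul_le_of_le_one_right' (setLIntegral_gammaDens_le_one hs (hc_pos u hu) hA')
  have hG_fin : ∫⁻ u in Ioo 0 1, G u ≠ ⊤ :=
    ne_top_of_le_ne_top (by rw [lintegral_betaDens hs]; exact ENNReal.one_ne_top)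
      (setLIntegral_mono' measurableSet_Ioo hG_le)
  rw [← ENNReal.ofReal_toReal hG_fin, ← integral_toReal hG.aemeasurable
    (ae_restrict_of_forall_mem measurableSet_Ioo fun u hu =>
      (hG_le u hu).trans_lt ENNReal.ofReal_lt_top)]
  congr 1
  refine setIntegral_congr_fun measurableSet_Ioo fun u hu => ?_
  rw [ENNReal.toReal_mul, ENNReal.toReal_ofReal (betaDens_nonneg hs hu), mul_comm,
    integral_eq_lintegral_of_nonneg_ae _ (by fun_prop)]
  exact ae_restrict_of_forall_mem hA fun x hx => gammaDens_nonneg hs (hc_pos u hu) (hA' hx)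

end

theorem kmp_reservoir_intertwining (s θ θs : ℝ) (hs : 0 < s) (hθ : 0 < θ) (hθs : 0 < θs)
    (A : Set ℝ) (hA : MeasurableSet A) (hA' : A ⊆ Set.Ici 0) :
    Measure.map (fun q : ℝ × ℝ × ℝ => q.2.2 * (q.1 + q.2.1))
        ((gammaMeas s θ).prod ((gammaMeas s θs).prod (betaMeas s))) A
      = ENNReal.ofReal
          (∫ u in Set.Ioo (0 : ℝ) 1,
            (∫ x in A, gammaDens s ((1 - u) * θ + u * θs) x) * betaDens s u) := by
  have hF : Measurable (A.indicator (1 : ℝ → ℝ≥0∞)) := measurable_one.indicator hA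
  rw [← lintegral_indicator_one hA, lintegral_map hF (by fun_prop),
    lintegral_prod_gammaMeas_betaMeas hs hθ hθs hF,
    ofReal_setIntegral_setIntegral_gammaDens_mul_betaDens hs (by fun_prop)
      (fun u ⟨hu₀, hu₁⟩ => by nlinarith) hA hA']
  simp_rw [setLIntegral_Ioi_mul_indicator_one hA hA']
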